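/- arXiv:1702.06902 — 2 statements merged into one kernel-verified Lean document; each statement's English description precedes it below -/
import Mathlib

section
/- If there exists a forward simulation relation R from transition graph G₁ to transition graph G₂ with respect to mode map lmap : L₁ → L₂, then G₁ ⪯_lmap G₂, i.e., for every trace σ of G₁, there is a trace σ' of G₂ such that lmap(σ) is a prefix of σ'. -/
/-- A transition graph over modes `L` with vertex set `V`: a directed graph with
mode-labeled vertices and real-interval-labeled edges. -/
structure TransitionGraph (L : Type) (V : Type) where
  E : V → V → Prop
  vlab : V → L
  elabel : V → V → Set ℝ

namespace TransitionGraph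

variable {L L₁ L₂ L₃ : Type} {V V₁ V₂ V₃ : Type}

/-- An initial vertex has no incoming edges. -/
def IsInit (G : TransitionGraph L V) (v : V) : Prop := ∀ u, ¬ G.E u v

/-- A terminal vertex has no outgoing edges. -/
def IsTerm (G : TransitionGraph L V) (v : V) : Prop := ∀ u, ¬ G.E v u

/-- The graph is a DAG. -/
def Acyclic (G : TransitionGraph L V) : Prop := ∀ v, ¬ Relation.TransGen G.E v v

/-- Every edge is labeled by a nonempty closed bounded interval of nonnegative reals. -/
def WellLabeled (G : TransitionGraph L V) : Prop :=
  ∀ v u, G.E v u → ∃ a b : ℝ, 0 ≤ a ∧ a ≤ b ∧ G.elabel v u = Set.Icc a b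

/-- `Chain G v l` : starting from vertex `v`, the list `l` of (time, vertex) pairs
follows edges of `G` with times in the corresponding edge labels. -/
inductive Chain (G : TransitionGraph L V) : V → List (ℝ × V) → Prop
  | nil (v : V) : Chain G v []
  | cons {v u : V} {t : ℝ} {rest : List (ℝ × V)} :
      G.E v u → t ∈ G.elabel v u → Chain G u rest → Chain G v ((t, u) :: rest)

/-- Last vertex of a chain starting at `v`. -/
def lastVtx (v : V) (l : List (ℝ × V)) : V := (l.map Prod.snd).getLastD v

/-- A (maximal) path: starts at an initial vertex, follows edges, ends at a terminal vertex. -/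
def IsPath (G : TransitionGraph L V) (v : V) (l : List (ℝ × V)) : Prop :=
  G.IsInit v ∧ G.Chain v l ∧ G.IsTerm (lastVtx v l)

/-- A trace: a first mode followed by a list of (switching time, mode) pairs. -/
abbrev TraceT (L : Type) := L × List (ℝ × L)

/-- The trace of a path. -/
def traceOf (G : TransitionGraph L V) (v : V) (l : List (ℝ × V)) : TraceT L :=
  (G.vlab v, l.map fun p => (p.1, G.vlab p.2))

/-- The set of traces of a transition graph. -/
def Traces (G : TransitionGraph L V) : Set (TraceT L) :=
  {σ | ∃ v l, G.IsPath v l ∧ σ = G.traceOf v l}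

/-- Relabeling a trace by a mode map. -/
def mapTrace (f : L₁ → L₂) (σ : TraceT L₁) : TraceT L₂ :=
  (f σ.1, σ.2.map fun p => (p.1, f p.2))

/-- `σ` is a prefix of `σ'` (same first mode, prefix of the switching sequence). -/
def TracePrefix (σ σ' : TraceT L) : Prop := σ.1 = σ'.1 ∧ σ.2 <+: σ'.2

/-- `G₁ ⪯_lmap G₂`: every trace of `G₁`, relabeled by `lmap`, is a prefix of a trace of `G₂`. -/
def Contained (lmap : L₁ → L₂) (G₁ : TransitionGraph L₁ V₁) (G₂ : TransitionGraph L₂ V₂) : Prop :=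
  ∀ σ ∈ G₁.Traces, ∃ σ' ∈ G₂.Traces, TracePrefix (mapTrace lmap σ) σ'

/-- Forward simulation relation from `G₁` to `G₂` with respect to mode map `lmap`. -/
def ForwardSim (lmap : L₁ → L₂) (G₁ : TransitionGraph L₁ V₁) (G₂ : TransitionGraph L₂ V₂)
    (R : V₁ → V₂ → Prop) : Prop :=
  (∀ v, G₁.IsInit v → ∃ u, G₂.IsInit u ∧ R v u) ∧
  (∀ v u, R v u → lmap (G₁.vlab v) = G₂.vlab u) ∧
  (∀ v v' u, G₁.E v v' → R v u →
    ∃ us : Finset V₂, (∀ u' ∈ us, G₂.E u u' ∧ R v' u') ∧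
      G₁.elabel v v' ⊆ ⋃ u' ∈ us, G₂.elabel u u')

/-- `v` is the unique initial vertex of `G`. -/
def UniqueInit (G : TransitionGraph L V) (v : V) : Prop :=
  G.IsInit v ∧ ∀ u, G.IsInit u → u = v

/-- `v` is the unique terminal vertex of `G`. -/
def UniqueTerm (G : TransitionGraph L V) (v : V) : Prop :=
  G.IsTerm v ∧ ∀ u, G.IsTerm u → u = v

/-- Sequential composition of `G₁` and `G₂`, gluing the terminal vertex `v1t` of `G₁`
to the initial vertex `v2i` of `G₂`. -/
def seqComp (G₁ : TransitionGraph L V₁) (G₂ : TransitionGraph L V₂)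
    (v1t : V₁) (v2i : V₂) : TransitionGraph L (V₁ ⊕ {u : V₂ // u ≠ v2i}) where
  E x y :=
    match x, y with
    | Sum.inl v, Sum.inl u => G₁.E v u
    | Sum.inl v, Sum.inr u => v = v1t ∧ G₂.E v2i u.1
    | Sum.inr _, Sum.inl _ => False
    | Sum.inr v, Sum.inr u => G₂.E v.1 u.1
  vlab x :=
    match x with
    | Sum.inl v => G₁.vlab v
    | Sum.inr u => G₂.vlab u.1
  elabel x y :=
    match x, y with
    | Sum.inl v, Sum.inl u => G₁.elabel v u
    | Sum.inl _, Sum.inr u => G₂.elabel v2i u.1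
    | Sum.inr _, Sum.inl _ => ∅
    | Sum.inr v, Sum.inr u => G₂.elabel v.1 u.1

/-- The side conditions under which the sequential composition `G₁ ⨟ G₂` is defined:
unique initial/terminal vertices and matching glue labels. -/
def ComposableAt (G₁ : TransitionGraph L V₁) (G₂ : TransitionGraph L V₂)
    (v1i v1t : V₁) (v2i v2t : V₂) : Prop :=
  G₁.UniqueInit v1i ∧ G₁.UniqueTerm v1t ∧ G₂.UniqueInit v2i ∧ G₂.UniqueTerm v2t ∧
    G₁.vlab v1t = G₂.vlab v2i

end TransitionGraph

/-!
A path of `G₁` is simulated edge by edge in `G₂`: each switching time lies in the label of some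
`R`-related successor edge, so the relabeled trace of the path is the trace of a chain of `G₂`
from an initial vertex. That chain need not end at a terminal vertex, but it can be extended to
one, because `G₂` is a finite DAG whose edge labels are nonempty; the extended chain is a path
whose trace has the relabeled trace as a prefix.
-/

namespace TransitionGraph

variable {L L₁ L₂ V V₁ V₂ : Type}

@[simp]
lemma lastVtx_cons (v : V) (p : ℝ × V) (l : List (ℝ × V)) :
    lastVtx v (p :: l) = lastVtx p.2 l := by
  simp only [lastVtx, List.map_cons, List.getLastD_cons]

lemma lastVtx_append (v : V) (l₁ l₂ : List (ℝ × V)) :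
    lastVtx v (l₁ ++ l₂) = lastVtx (lastVtx v l₁) l₂ := by
  induction l₁ generalizing v with
  | nil => rfl
  | cons p l₁ ih => simp only [List.cons_append, lastVtx_cons, ih]

lemma Chain.append {G : TransitionGraph L V} {v : V} {l₁ l₂ : List (ℝ × V)}
    (h₁ : G.Chain v l₁) (h₂ : G.Chain (lastVtx v l₁) l₂) : G.Chain v (l₁ ++ l₂) := by
  induction h₁ with
  | nil => exact h₂
  | cons hE ht _ ih => exact Chain.cons hE ht (ih (by simpa using h₂))

lemma traceOf_prefix_append (G : TransitionGraph L V) (v : V) (l l' : List (ℝ × V)) :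
    TracePrefix (G.traceOf v l) (G.traceOf v (l ++ l')) :=
  ⟨rfl, by simp only [traceOf, List.map_append]; exact List.prefix_append _ _⟩

lemma WellLabeled.nonempty {G : TransitionGraph L V} (hW : G.WellLabeled) ⦃v u : V⦄
    (hE : G.E v u) : (G.elabel v u).Nonempty := by
  obtain ⟨a, b, -, hab, hlabel⟩ := hW v u hE
  exact hlabel ▸ Set.nonempty_Icc.mpr hab

lemma Acyclic.wellFounded_flip [Finite V] {G : TransitionGraph L V} (hA : G.Acyclic) :
    WellFounded (flip G.E) := by
  have : Std.Irrefl (flip (Relation.TransGen G.E)) := ⟨hA⟩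
  have : IsTrans V (flip (Relation.TransGen G.E)) := ⟨fun _ _ _ h₁ h₂ => h₂.trans h₁⟩
  exact Subrelation.wf (r := flip (Relation.TransGen G.E)) (fun h => .single h)
    (Finite.wellFounded_of_trans_of_irrefl _)

lemma exists_chain_isTerm [Finite V] {G : TransitionGraph L V} (hA : G.Acyclic)
    (hne : ∀ ⦃v u⦄, G.E v u → (G.elabel v u).Nonempty) (v : V) :
    ∃ l, G.Chain v l ∧ G.IsTerm (lastVtx v l) := by
  induction v using hA.wellFounded_flip.induction with
  | _ v ih =>
    by_cases hterm : G.IsTerm v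
    · exact ⟨[], Chain.nil v, hterm⟩
    · obtain ⟨u, hE⟩ : ∃ u, G.E v u := by simpa [IsTerm] using hterm
      obtain ⟨t, ht⟩ := hne hE
      obtain ⟨l, hl, hlast⟩ := ih u hE
      exact ⟨(t, u) :: l, Chain.cons hE ht hl, by rwa [lastVtx_cons]⟩

lemma ForwardSim.exists_chain {G₁ : TransitionGraph L₁ V₁} {G₂ : TransitionGraph L₂ V₂}
    {lmap : L₁ → L₂} {R : V₁ → V₂ → Prop} (hR : ForwardSim lmap G₁ G₂ R)
    {v : V₁} {l : List (ℝ × V₁)} (hl : G₁.Chain v l) {u : V₂} (hvu : R v u) :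
    ∃ l₂, G₂.Chain u l₂ ∧ mapTrace lmap (G₁.traceOf v l) = G₂.traceOf u l₂ := by
  induction hl generalizing u with
  | nil v => exact ⟨[], Chain.nil u, by simp [mapTrace, traceOf, hR.2.1 v u hvu]⟩
  | @cons v v' t l hE ht _ ih =>
    obtain ⟨us, hus, hcover⟩ := hR.2.2 v v' u hE hvu
    obtain ⟨u', hu', htu'⟩ := Set.mem_iUnion₂.mp (hcover ht)
    obtain ⟨hE₂, hv'u'⟩ := hus u' hu'
    obtain ⟨l₂, hl₂, htrace⟩ := ih hv'u'
    refine ⟨(t, u') :: l₂, Chain.cons hE₂ htu' hl₂, ?_⟩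
    simp only [mapTrace, traceOf, Prod.mk.injEq] at htrace ⊢
    simp [hR.2.1 v u hvu, htrace.2, ← htrace.1]

end TransitionGraph

open TransitionGraph in
theorem forwardSim_implies_contained_general {L₁ L₂ V₁ V₂ : Type} [Fintype V₂]
    (G₁ : TransitionGraph L₁ V₁) (G₂ : TransitionGraph L₂ V₂)
    (hA₂ : G₂.Acyclic) (hW₂ : G₂.WellLabeled)
    (lmap : L₁ → L₂) (R : V₁ → V₂ → Prop) (hR : ForwardSim lmap G₁ G₂ R) :
    Contained lmap G₁ G₂ := by
  rintro σ ⟨v, l, ⟨hinit, hl, -⟩, rfl⟩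
  obtain ⟨u, hu, hvu⟩ := hR.1 v hinit
  obtain ⟨l₂, hl₂, htrace⟩ := hR.exists_chain hl hvu
  obtain ⟨l', hl', hterm⟩ := exists_chain_isTerm hA₂ hW₂.nonempty (lastVtx u l₂)
  have hpath : G₂.IsPath u (l₂ ++ l') := ⟨hu, hl₂.append hl', by rwa [lastVtx_append]⟩
  exact ⟨_, ⟨u, _, hpath, rfl⟩, htrace ▸ G₂.traceOf_prefix_append u l₂ l'⟩

open TransitionGraph in
/-- If there exists a forward simulation relation from `G₁` to `G₂` with respect to the
mode map `lmap`, then `G₁ ⪯_lmap G₂`: every trace of `G₁`, relabeled by `lmap`, is a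
prefix of some trace of `G₂`. -/
theorem forwardSim_implies_contained {L₁ L₂ V₁ V₂ : Type} [Fintype V₁] [Fintype V₂]
    (G₁ : TransitionGraph L₁ V₁) (G₂ : TransitionGraph L₂ V₂)
    (hA₁ : G₁.Acyclic) (hA₂ : G₂.Acyclic) (hW₁ : G₁.WellLabeled) (hW₂ : G₂.WellLabeled)
    (lmap : L₁ → L₂) (R : V₁ → V₂ → Prop) (hR : ForwardSim lmap G₁ G₂ R) :
    Contained lmap G₁ G₂ :=
  forwardSim_implies_contained_general G₁ G₂ hA₂ hW₂ lmap R hR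
end

section
/- The largest forward simulation between two transition graphs is the greatest fixpoint of a monotone functional on relations over vertex pairs, and since G₁ is a directed acyclic graph, the iterative refinement starting from V₁ × V₂ (repeatedly removing pairs (v,u) such that v is not one-step simulated by u) reaches this fixpoint within |V₁| iterations. -/
namespace TransitionGraph

/-- The one-step simulation functional: `(v, u)` survives relative to `R` iff the labels
match under `lmap` and every outgoing edge of `v` is covered by a finite family of
outgoing edges of `u` leading to `R`-related successors. -/
def simStep {L₁ L₂ V₁ V₂ : Type} (lmap : L₁ → L₂)
    (G₁ : TransitionGraph L₁ V₁) (G₂ : TransitionGraph L₂ V₂)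
    (R : V₁ → V₂ → Prop) : V₁ → V₂ → Prop := fun v u =>
  lmap (G₁.vlab v) = G₂.vlab u ∧
    ∀ v', G₁.E v v' →
      ∃ us : Finset V₂, (∀ u' ∈ us, G₂.E u u' ∧ R v' u') ∧
        G₁.elabel v v' ⊆ ⋃ u' ∈ us, G₂.elabel u u'

end TransitionGraph

/-!
`simStep R` decides a pair `(v, u)` from `R` restricted to the successors of `v` only. Hence,
by induction on the number `d v` of vertices reachable from `v`, the iterates of `simStep`
from `⊤` no longer change at `v` after `d v + 1` steps; in a finite DAG `d v < |V₁|`, so the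
`|V₁|`-th iterate is a fixpoint. Every post-fixpoint, in particular every forward simulation,
lies below all iterates from `⊤` by monotonicity.
-/

namespace TransitionGraph

variable {L₁ L₂ V₁ V₂ : Type}

section Descendants

variable {L V : Type} (G : TransitionGraph L V)

noncomputable def numDescendants (v : V) : ℕ := {w | Relation.TransGen G.E v w}.ncard

variable {G}

lemma numDescendants_lt_of_E [Finite V] (hA : G.Acyclic) {v v' : V} (h : G.E v v') :
    G.numDescendants v' < G.numDescendants v := by
  refine Set.ncard_lt_ncard ⟨fun w hw => .head h hw, fun hsub => ?_⟩ (Set.toFinite _)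
  exact hA v' (hsub (.single h))

lemma numDescendants_lt_card [Fintype V] (hA : G.Acyclic) (v : V) :
    G.numDescendants v < Fintype.card V := by
  rw [← Nat.card_eq_fintype_card, ← Set.ncard_univ]
  refine Set.ncard_lt_ncard (Set.ssubset_univ_iff.mpr fun h => hA v ?_) (Set.toFinite _)
  exact (Set.eq_univ_iff_forall.mp h) v

end Descendants

variable {lmap : L₁ → L₂} {G₁ : TransitionGraph L₁ V₁} {G₂ : TransitionGraph L₂ V₂}

lemma simStep_le_simStep_of_forall_E {R S : V₁ → V₂ → Prop} {v : V₁}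
    (h : ∀ v', G₁.E v v' → R v' ≤ S v') :
    simStep lmap G₁ G₂ R v ≤ simStep lmap G₁ G₂ S v := by
  rintro u ⟨hlab, hcover⟩
  refine ⟨hlab, fun v' hv' => ?_⟩
  obtain ⟨us, hus, hsub⟩ := hcover v' hv'
  exact ⟨us, fun u' hu' => ⟨(hus u' hu').1, h v' hv' u' (hus u' hu').2⟩, hsub⟩

lemma simStep_monotone : Monotone (simStep lmap G₁ G₂) :=
  fun _ _ h _ => simStep_le_simStep_of_forall_E fun v' _ => h v'

lemma le_iterate_simStep_top {R : V₁ → V₂ → Prop} (hR : R ≤ simStep lmap G₁ G₂ R) (n : ℕ) :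
    R ≤ (simStep lmap G₁ G₂)^[n] ⊤ :=
  (Monotone.monotone_iterate_of_le_map simStep_monotone hR (Nat.zero_le n)).trans
    (simStep_monotone.iterate n le_top)

lemma ForwardSim.le_simStep {R : V₁ → V₂ → Prop} (hR : ForwardSim lmap G₁ G₂ R) :
    R ≤ simStep lmap G₁ G₂ R :=
  fun v u hvu => ⟨hR.2.1 v u hvu, fun v' hv' => hR.2.2 v v' u hv' hvu⟩

lemma iterate_simStep_top_le_of_numDescendants_lt [Finite V₁] (hA : G₁.Acyclic) {k : ℕ} :
    ∀ {v : V₁}, G₁.numDescendants v < k →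
      ∀ m, (simStep lmap G₁ G₂)^[k] ⊤ v ≤ (simStep lmap G₁ G₂)^[m] ⊤ v := by
  induction k with
  | zero => intro v hv; omega
  | succ k ih =>
    intro v hv m
    cases m with
    | zero => exact le_top
    | succ m =>
      simp only [Function.iterate_succ_apply']
      exact simStep_le_simStep_of_forall_E fun v' hv' =>
        ih ((numDescendants_lt_of_E hA hv').trans_le (Nat.lt_succ_iff.mp hv)) m

lemma simStep_iterate_card_top [Fintype V₁] (hA : G₁.Acyclic) :
    simStep lmap G₁ G₂ ((simStep lmap G₁ G₂)^[Fintype.card V₁] ⊤) =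
      (simStep lmap G₁ G₂)^[Fintype.card V₁] ⊤ := by
  rw [← Function.iterate_succ_apply' (simStep lmap G₁ G₂)]
  refine le_antisymm
    (Monotone.antitone_iterate_of_map_le simStep_monotone le_top (Nat.le_succ _)) fun v => ?_
  exact iterate_simStep_top_le_of_numDescendants_lt hA (numDescendants_lt_card hA v) _

end TransitionGraph

open TransitionGraph in
theorem simStep_gfp_in_card_iterations_general {L₁ L₂ V₁ V₂ : Type} [Fintype V₁]
    (G₁ : TransitionGraph L₁ V₁) (G₂ : TransitionGraph L₂ V₂)
    (hA₁ : G₁.Acyclic)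
    (lmap : L₁ → L₂) :
    Monotone (simStep lmap G₁ G₂) ∧
    simStep lmap G₁ G₂ ((simStep lmap G₁ G₂)^[Fintype.card V₁] ⊤) =
      (simStep lmap G₁ G₂)^[Fintype.card V₁] ⊤ ∧
    (∀ R : V₁ → V₂ → Prop, R ≤ simStep lmap G₁ G₂ R →
      R ≤ (simStep lmap G₁ G₂)^[Fintype.card V₁] ⊤) ∧
    (∀ R : V₁ → V₂ → Prop, ForwardSim lmap G₁ G₂ R →
      R ≤ (simStep lmap G₁ G₂)^[Fintype.card V₁] ⊤) :=
  ⟨simStep_monotone, simStep_iterate_card_top hA₁, fun _ hR => le_iterate_simStep_top hR _,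
    fun _ hR => le_iterate_simStep_top hR.le_simStep _⟩

open TransitionGraph in
/-- The largest forward simulation between transition graphs is the greatest fixpoint of
the monotone functional `simStep`, and since `G₁` is a finite DAG, iterating `simStep`
starting from the full relation `V₁ × V₂` reaches this fixpoint within `|V₁|` iterations:
the iterate is a fixpoint, it dominates every post-fixpoint (hence is the greatest
fixpoint), and it dominates every forward simulation. -/
theorem simStep_gfp_in_card_iterations {L₁ L₂ V₁ V₂ : Type} [Fintype V₁] [Fintype V₂]
    (G₁ : TransitionGraph L₁ V₁) (G₂ : TransitionGraph L₂ V₂)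
    (hA₁ : G₁.Acyclic) (hA₂ : G₂.Acyclic) (hW₁ : G₁.WellLabeled) (hW₂ : G₂.WellLabeled)
    (lmap : L₁ → L₂) :
    Monotone (simStep lmap G₁ G₂) ∧
    simStep lmap G₁ G₂ ((simStep lmap G₁ G₂)^[Fintype.card V₁] ⊤) =
      (simStep lmap G₁ G₂)^[Fintype.card V₁] ⊤ ∧
    (∀ R : V₁ → V₂ → Prop, R ≤ simStep lmap G₁ G₂ R →
      R ≤ (simStep lmap G₁ G₂)^[Fintype.card V₁] ⊤) ∧
    (∀ R : V₁ → V₂ → Prop, ForwardSim lmap G₁ G₂ R →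
      R ≤ (simStep lmap G₁ G₂)^[Fintype.card V₁] ⊤) :=
  simStep_gfp_in_card_iterations_general G₁ G₂ hA₁ lmap
end
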